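/- Let f : ℝⁿ → ℝⁿ satisfy f(0) = 0, be differentiable at every point with Jacobian J_f, with J_f continuous at 0 and J_f(0) invertible. Then ‖f(x)/‖f(x)‖ − J_f(x)x/‖J_f(x)x‖‖ → 0 as x → 0 (along x for which both vectors are nonzero). -/
import Mathlib

open scoped Topology

lemma unit_diff_le {E : Type*} [NormedAddCommGroup E] [NormedSpace ℝ E]
    {u v : E} (hu : u ≠ 0) (hv : v ≠ 0) :
    ‖‖u‖⁻¹ • u - ‖v‖⁻¹ • v‖ ≤ 2 * ‖u - v‖ / ‖u‖ := by
  have ha : (0:ℝ) < ‖u‖ := norm_pos_iff.mpr hu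
  have hb : (0:ℝ) < ‖v‖ := norm_pos_iff.mpr hv
  have key : ‖u‖⁻¹ • u - ‖v‖⁻¹ • v
      = ‖u‖⁻¹ • (u - v) + (‖u‖⁻¹ - ‖v‖⁻¹) • v := by
    rw [smul_sub, sub_smul]; abel
  rw [key]
  have h1 : ‖‖u‖⁻¹ • (u - v)‖ = ‖u‖⁻¹ * ‖u - v‖ := by
    rw [norm_smul, Real.norm_eq_abs, abs_of_pos (inv_pos.mpr ha)]
  have h3 : ‖u‖⁻¹ - ‖v‖⁻¹ = (‖v‖ - ‖u‖) * (‖u‖⁻¹ * ‖v‖⁻¹) := by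
    field_simp
  have h2 : ‖(‖u‖⁻¹ - ‖v‖⁻¹) • v‖ = |‖v‖ - ‖u‖| * ‖u‖⁻¹ := by
    rw [norm_smul, Real.norm_eq_abs, h3, abs_mul,
      abs_of_pos (mul_pos (inv_pos.mpr ha) (inv_pos.mpr hb))]
    field_simp
  have h4 : |‖v‖ - ‖u‖| ≤ ‖u - v‖ := by
    rw [norm_sub_rev]
    exact abs_norm_sub_norm_le v u
  calc ‖‖u‖⁻¹ • (u - v) + (‖u‖⁻¹ - ‖v‖⁻¹) • v‖
      ≤ ‖‖u‖⁻¹ • (u - v)‖ + ‖(‖u‖⁻¹ - ‖v‖⁻¹) • v‖ := norm_add_le _ _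
    _ = ‖u‖⁻¹ * ‖u - v‖ + |‖v‖ - ‖u‖| * ‖u‖⁻¹ := by rw [h1, h2]
    _ ≤ ‖u‖⁻¹ * ‖u - v‖ + ‖u - v‖ * ‖u‖⁻¹ := by
        gcongr
    _ = 2 * ‖u - v‖ / ‖u‖ := by ring

theorem jacobian_direction_preserving {n : ℕ}
    (f : EuclideanSpace ℝ (Fin n) → EuclideanSpace ℝ (Fin n))
    (J : EuclideanSpace ℝ (Fin n) →
      EuclideanSpace ℝ (Fin n) →L[ℝ] EuclideanSpace ℝ (Fin n))
    (hf0 : f 0 = 0)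
    (hdiff : ∀ x, HasFDerivAt f (J x) x)
    (hcont : ContinuousAt J 0)
    (hinv : Function.Bijective (J 0)) :
    Filter.Tendsto
      (fun x => ‖‖f x‖⁻¹ • f x - ‖J x x‖⁻¹ • J x x‖)
      (𝓝[{x | f x ≠ 0 ∧ J x x ≠ 0}] 0) (𝓝 0) := by
  classical
  let e : EuclideanSpace ℝ (Fin n) ≃L[ℝ] EuclideanSpace ℝ (Fin n) :=
    LinearEquiv.toContinuousLinearEquiv (LinearEquiv.ofBijective (J 0).toLinearMap hinv)
  set C : ℝ := max ‖(e.symm : EuclideanSpace ℝ (Fin n) →L[ℝ] EuclideanSpace ℝ (Fin n))‖ 1 with hCdef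
  have hC1 : (1:ℝ) ≤ C := le_max_right _ _
  have hC0 : (0:ℝ) < C := lt_of_lt_of_le one_pos hC1
  have hlow : ∀ x, ‖x‖ ≤ C * ‖J 0 x‖ := by
    intro x
    have hx : x = e.symm (e x) := (e.symm_apply_apply x).symm
    calc ‖x‖ = ‖e.symm (e x)‖ := by rw [← hx]
      _ ≤ ‖(e.symm : EuclideanSpace ℝ (Fin n) →L[ℝ] EuclideanSpace ℝ (Fin n))‖ * ‖e x‖ :=
          (e.symm : EuclideanSpace ℝ (Fin n) →L[ℝ] EuclideanSpace ℝ (Fin n)).le_opNorm _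
      _ ≤ C * ‖J 0 x‖ := by
          have : (e x : EuclideanSpace ℝ (Fin n)) = J 0 x := rfl
          rw [this]
          gcongr
          exact le_max_left _ _
  rw [Metric.tendsto_nhdsWithin_nhds]
  intro ε hε
  set η : ℝ := min (1/(4*C)) (ε/(16*C)) with hηdef
  have hη0 : 0 < η := lt_min (by positivity) (by positivity)
  have hη1 : η ≤ 1/(4*C) := min_le_left _ _
  have hη2 : η ≤ ε/(16*C) := min_le_right _ _
  have h1 : ∀ᶠ x in 𝓝 (0:EuclideanSpace ℝ (Fin n)), ‖f x - J 0 x‖ ≤ η * ‖x‖ := by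
    have hlo := (hdiff 0).isLittleO
    filter_upwards [hlo.def hη0] with x hx
    simpa [hf0] using hx
  have h2 : ∀ᶠ x in 𝓝 (0:EuclideanSpace ℝ (Fin n)), ‖J x - J 0‖ < η := by
    have := Metric.tendsto_nhds.mp hcont η hη0
    filter_upwards [this] with x hx
    rwa [dist_eq_norm] at hx
  obtain ⟨δ, hδ0, hδ⟩ := Metric.eventually_nhds_iff.mp (h1.and h2)
  refine ⟨δ, hδ0, ?_⟩
  rintro x ⟨hfx, hJx⟩ hxd
  have hxne : x ≠ 0 := by rintro rfl; exact hfx hf0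
  have hx0 : 0 < ‖x‖ := norm_pos_iff.mpr hxne
  obtain ⟨hA, hB⟩ := hδ hxd
  -- closeness bound
  have hclose : ‖f x - J x x‖ ≤ 2 * η * ‖x‖ := by
    have hb : ‖J 0 x - J x x‖ ≤ η * ‖x‖ := by
      have : ‖(J 0 - J x) x‖ ≤ ‖J 0 - J x‖ * ‖x‖ := (J 0 - J x).le_opNorm x
      rw [ContinuousLinearMap.sub_apply] at this
      refine this.trans ?_
      gcongr
      rw [norm_sub_rev]
      exact hB.le
    calc ‖f x - J x x‖ = ‖(f x - J 0 x) + (J 0 x - J x x)‖ := by rw [sub_add_sub_cancel]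
      _ ≤ ‖f x - J 0 x‖ + ‖J 0 x - J x x‖ := norm_add_le _ _
      _ ≤ η * ‖x‖ + η * ‖x‖ := add_le_add hA hb
      _ = 2 * η * ‖x‖ := by ring
  -- lower bound for ‖f x‖
  have hflow : ‖x‖ / (2*C) ≤ ‖f x‖ := by
    have h5 : ‖J 0 x‖ ≤ ‖f x‖ + η * ‖x‖ := by
      calc ‖J 0 x‖ = ‖f x - (f x - J 0 x)‖ := by rw [sub_sub_cancel]
        _ ≤ ‖f x‖ + ‖f x - J 0 x‖ := norm_sub_le _ _
        _ ≤ ‖f x‖ + η * ‖x‖ := by gcongr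
    have h6 : ‖x‖ ≤ C * (‖f x‖ + η * ‖x‖) := (hlow x).trans (by gcongr)
    have hηC : η * C ≤ 1/4 := by
      calc η * C ≤ (1/(4*C)) * C := by gcongr
        _ = 1/4 := by field_simp
    rw [div_le_iff₀ (by positivity : (0:ℝ) < 2*C)]
    nlinarith [mul_le_mul_of_nonneg_right hηC hx0.le, norm_nonneg (f x), hC0]
  have hfxpos : 0 < ‖f x‖ := norm_pos_iff.mpr hfx
  have hbound := unit_diff_le hfx hJx
  rw [Real.dist_eq, sub_zero, abs_of_nonneg (norm_nonneg _)]
  refine lt_of_le_of_lt (hbound.trans ?_) (by linarith : ε/2 < ε)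
  rw [div_le_iff₀ hfxpos]
  have hεη : 4 * η * C ≤ ε / 4 := by
    calc 4 * η * C ≤ 4 * (ε/(16*C)) * C := by gcongr
      _ = ε / 4 := by field_simp; ring
  have h7 : ε/2 * (‖x‖/(2*C)) ≤ ε/2 * ‖f x‖ := by gcongr
  have h8 : 2 * ‖f x - J x x‖ ≤ 4 * η * ‖x‖ := by linarith
  have h9 : 4 * η * ‖x‖ ≤ ε/2 * (‖x‖/(2*C)) := by
    have h10 : 4 * η * ‖x‖ ≤ 4 * (ε/(16*C)) * ‖x‖ := by gcongr
    refine h10.trans (le_of_eq ?_)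
    field_simp
    ring
  linarith
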